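/- Let n ≥ 1 and let X_1, …, X_n, X'_1, …, X'_n be random variables taking values in finite types (X_j the initial and X'_j the final state of subsystem j). For each j let dep(j) ⊆ {1,…,j−1} and set D_j := (X_i)_{i∈dep(j)}, N_j := (X_i)_{i∈{1,…,j−1}∖dep(j)}. Assume for every j ≥ 2: (a) X'_j and N_j are conditionally independent given (X_j, D_j), and (b) X'_j and (X'_1,…,X'_{j−1}) are conditionally independent given (X_1,…,X_{j−1}). Then Δ_I := Σ_{j=2}^n [I(X'_j; D_j) − I(X_j; D_j)] − Σ_{j=2}^n [I(X'_j; (X'_1,…,X'_{j−1})) − I(X_j; (X_1,…,X_{j−1}))] ≥ 0. -/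
import Mathlib


open scoped BigOperators

section InfoDefs

variable {Ω : Type*} [Fintype Ω]

/-- Pushforward probability mass function: `P(X = a)` for the random variable `X`
on the finite probability space `(Ω, μ)`. -/
def prob {α : Type*} [DecidableEq α] (μ : Ω → ℝ) (X : Ω → α) (a : α) : ℝ :=
  ∑ ω, if X ω = a then μ ω else 0

/-- Shannon entropy (natural logarithm) of the random variable `X` under `μ`. -/
noncomputable def ent {α : Type*} [Fintype α] [DecidableEq α] (μ : Ω → ℝ) (X : Ω → α) : ℝ :=
  ∑ a, Real.negMulLog (prob μ X a)

/-- Conditional Shannon entropy `H(X | Y)`. -/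
noncomputable def condEnt {α β : Type*} [Fintype α] [DecidableEq α] [Fintype β] [DecidableEq β]
    (μ : Ω → ℝ) (X : Ω → α) (Y : Ω → β) : ℝ :=
  ent μ (fun ω => (X ω, Y ω)) - ent μ Y

/-- Mutual information `I(X;Y)`. -/
noncomputable def mi {α β : Type*} [Fintype α] [DecidableEq α] [Fintype β] [DecidableEq β]
    (μ : Ω → ℝ) (X : Ω → α) (Y : Ω → β) : ℝ :=
  ent μ X + ent μ Y - ent μ (fun ω => (X ω, Y ω))

/-- Conditional mutual information `I(X;Y|Z)`. -/
noncomputable def cmi {α β γ : Type*} [Fintype α] [DecidableEq α] [Fintype β] [DecidableEq β]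
    [Fintype γ] [DecidableEq γ] (μ : Ω → ℝ) (X : Ω → α) (Y : Ω → β) (Z : Ω → γ) : ℝ :=
  ent μ (fun ω => (X ω, Z ω)) + ent μ (fun ω => (Y ω, Z ω))
    - ent μ (fun ω => (X ω, Y ω, Z ω)) - ent μ Z

/-- Conditional independence of `U` and `V` given `W`:
the joint law satisfies `P(U,V,W)·P(W) = P(U,W)·P(V,W)` pointwise. -/
def CondIndep {α β γ : Type*} [DecidableEq α] [DecidableEq β] [DecidableEq γ]
    (μ : Ω → ℝ) (U : Ω → α) (V : Ω → β) (W : Ω → γ) : Prop :=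
  ∀ u v w, prob μ (fun ω => (U ω, V ω, W ω)) (u, v, w) * prob μ W w
    = prob μ (fun ω => (U ω, W ω)) (u, w) * prob μ (fun ω => (V ω, W ω)) (v, w)

/-- The tuple `(A_0, …, A_{n-1})` of the first `n` members of a family of random
variables, viewed as a single random variable valued in a (dependent) product type. -/
def tup {α : ℕ → Type*} (A : (i : ℕ) → Ω → α i) (n : ℕ) : Ω → ((i : Fin n) → α i.1) :=
  fun ω i => A i.1 ω

/-- The restriction `(A_i)_{i ∈ s}` of a family of random variables to a finite index
set `s`, viewed as a single random variable (a one-point constant if `s = ∅`). -/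
def restrict {α : ℕ → Type*} (A : (i : ℕ) → Ω → α i) (s : Finset ℕ) :
    Ω → ((i : s) → α i.1) :=
  fun ω i => A i.1 ω

end InfoDefs

section Aux

variable {Ω : Type*} [Fintype Ω] {μ : Ω → ℝ}

lemma prob_nonneg {α : Type*} [DecidableEq α] (hμ0 : ∀ ω, 0 ≤ μ ω)
    (X : Ω → α) (a : α) : 0 ≤ prob μ X a := by
  refine Finset.sum_nonneg fun ω _ => ?_
  split
  · exact hμ0 ω
  · exact le_rfl

lemma sum_prob {α : Type*} [Fintype α] [DecidableEq α] (X : Ω → α) :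
    ∑ a, prob μ X a = ∑ ω, μ ω := by
  unfold prob
  rw [Finset.sum_comm]
  refine Finset.sum_congr rfl fun ω _ => ?_
  simp

lemma exists_of_prob_ne_zero {α : Type*} [DecidableEq α] {X : Ω → α} {a : α}
    (h : prob μ X a ≠ 0) : ∃ ω, X ω = a := by
  by_contra hc
  push_neg at hc
  exact h (Finset.sum_eq_zero fun ω _ => by simp [hc ω])

lemma prob_comp {γ κ : Type*} [Fintype γ] [DecidableEq γ] [DecidableEq κ]
    (V : Ω → γ) (W : Ω → κ) (f : γ → κ) (hW : ∀ ω, W ω = f (V ω)) (w : κ) :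
    prob μ W w = ∑ v, if f v = w then prob μ V v else 0 := by
  unfold prob
  calc (∑ ω, if W ω = w then μ ω else 0)
      = ∑ ω, ∑ v, (if f v = w then (if V ω = v then μ ω else 0) else 0) := by
        refine Finset.sum_congr rfl fun ω _ => ?_
        rw [Finset.sum_eq_single_of_mem (V ω) (Finset.mem_univ _)
          (fun b _ hb => by simp [Ne.symm hb])]
        simp [hW ω]
    _ = ∑ v, ∑ ω, (if f v = w then (if V ω = v then μ ω else 0) else 0) := Finset.sum_comm
    _ = ∑ v, if f v = w then (∑ ω, if V ω = v then μ ω else 0) else 0 := by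
        refine Finset.sum_congr rfl fun v _ => ?_
        split
        · rfl
        · exact Finset.sum_const_zero

lemma prob_le_comp {γ κ : Type*} [DecidableEq γ] [DecidableEq κ]
    (hμ0 : ∀ ω, 0 ≤ μ ω)
    (V : Ω → γ) (W : Ω → κ) (f : γ → κ) (hW : ∀ ω, W ω = f (V ω)) (v : γ) :
    prob μ V v ≤ prob μ W (f v) := by
  refine Finset.sum_le_sum fun ω _ => ?_
  by_cases h : V ω = v
  · simp [h, hW ω]
  · simp only [h, if_false]
    split
    · exact hμ0 ω
    · exact le_rfl

lemma ent_eq_sum {γ κ : Type*} [Fintype γ] [DecidableEq γ] [Fintype κ] [DecidableEq κ]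
    (V : Ω → γ) (W : Ω → κ) (f : γ → κ) (hW : ∀ ω, W ω = f (V ω)) :
    ent μ W = -∑ v, prob μ V v * Real.log (prob μ W (f v)) := by
  unfold ent
  have key : ∀ b, Real.negMulLog (prob μ W b)
      = -∑ v, (if f v = b then prob μ V v * Real.log (prob μ W b) else 0) := by
    intro b
    rw [Real.negMulLog]
    rw [show (∑ v, if f v = b then prob μ V v * Real.log (prob μ W b) else 0)
        = (∑ v, if f v = b then prob μ V v else 0) * Real.log (prob μ W b) from by
      rw [Finset.sum_mul]
      exact Finset.sum_congr rfl fun v _ => by rw [ite_mul, zero_mul]]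
    rw [← prob_comp V W f hW b]
    ring
  calc ∑ b, Real.negMulLog (prob μ W b)
      = ∑ b, -∑ v, (if f v = b then prob μ V v * Real.log (prob μ W b) else 0) :=
        Finset.sum_congr rfl fun b _ => key b
    _ = -∑ b, ∑ v, (if f v = b then prob μ V v * Real.log (prob μ W b) else 0) := by
        rw [Finset.sum_neg_distrib]
    _ = -∑ v, ∑ b, (if f v = b then prob μ V v * Real.log (prob μ W b) else 0) := by
        rw [Finset.sum_comm]
    _ = -∑ v, prob μ V v * Real.log (prob μ W (f v)) := by
        congr 1
        refine Finset.sum_congr rfl fun v _ => ?_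
        rw [Finset.sum_ite_eq]
        simp

lemma sum_prob_fst {α γ : Type*} [Fintype α] [DecidableEq α] [DecidableEq γ]
    (A : Ω → α) (C : Ω → γ) (z : γ) :
    ∑ x, prob μ (fun ω => (A ω, C ω)) (x, z) = prob μ C z := by
  unfold prob
  rw [Finset.sum_comm]
  refine Finset.sum_congr rfl fun ω _ => ?_
  rw [Finset.sum_eq_single_of_mem (A ω) (Finset.mem_univ _)]
  · simp [Prod.ext_iff]
  · intro b _ hb
    simp [Prod.ext_iff, Ne.symm hb]

lemma prob_relabel {γ κ : Type*} [DecidableEq γ] [DecidableEq κ]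
    (V : Ω → γ) (W : Ω → κ) (f : γ → κ) (g : κ → γ)
    (hW : ∀ ω, W ω = f (V ω)) (hg : ∀ ω, g (f (V ω)) = V ω) (b : κ) :
    prob μ W b = if f (g b) = b then prob μ V (g b) else 0 := by
  unfold prob
  split_ifs with h
  · refine Finset.sum_congr rfl fun ω _ => ?_
    have hiff : W ω = b ↔ V ω = g b := by
      rw [hW ω]
      constructor
      · intro he
        rw [← he, hg ω]
      · intro he
        rw [he, h]
    rw [if_congr hiff rfl rfl]
  · refine Finset.sum_eq_zero fun ω _ => ?_
    rw [if_neg]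
    intro he
    rw [hW ω] at he
    exact h (by rw [← he, hg ω, he])

lemma ent_relabel {γ κ : Type*} [Fintype γ] [DecidableEq γ] [Fintype κ] [DecidableEq κ]
    (V : Ω → γ) (W : Ω → κ) (f : γ → κ) (g : κ → γ)
    (hW : ∀ ω, W ω = f (V ω)) (hg : ∀ ω, g (f (V ω)) = V ω) :
    ent μ W = ent μ V := by
  classical
  unfold ent
  calc ∑ b, Real.negMulLog (prob μ W b)
      = ∑ b, Real.negMulLog (if f (g b) = b then prob μ V (g b) else 0) :=
        Finset.sum_congr rfl fun b _ => by rw [prob_relabel V W f g hW hg b]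
    _ = ∑ b ∈ Finset.univ.filter (fun b => f (g b) = b ∧ prob μ V (g b) ≠ 0),
          Real.negMulLog (if f (g b) = b then prob μ V (g b) else 0) := by
        rw [Finset.sum_filter_of_ne]
        intro b _ hb
        constructor
        · by_contra hc
          exact hb (by rw [if_neg hc, Real.negMulLog_zero])
        · intro hc
          exact hb (by rw [hc]; split <;> simp)
    _ = ∑ a ∈ Finset.univ.filter (fun a => prob μ V a ≠ 0), Real.negMulLog (prob μ V a) := by
        refine Finset.sum_nbij' g f ?_ ?_ ?_ ?_ ?_
        · intro b hb
          rw [Finset.mem_filter] at hb ⊢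
          exact ⟨Finset.mem_univ _, hb.2.2⟩
        · intro a ha
          rw [Finset.mem_filter] at ha ⊢
          obtain ⟨ω, rfl⟩ := exists_of_prob_ne_zero ha.2
          refine ⟨Finset.mem_univ _, ?_⟩
          rw [hg ω]
          exact ⟨rfl, ha.2⟩
        · intro b hb
          rw [Finset.mem_filter] at hb
          exact hb.2.1
        · intro a ha
          rw [Finset.mem_filter] at ha
          obtain ⟨ω, rfl⟩ := exists_of_prob_ne_zero ha.2
          exact hg ω
        · intro b hb
          rw [Finset.mem_filter] at hb
          rw [if_pos hb.2.1]
    _ = ∑ a, Real.negMulLog (prob μ V a) := by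
        rw [Finset.sum_filter_of_ne]
        intro a _ ha
        by_contra hc
        exact ha (by rw [hc, Real.negMulLog_zero])

lemma mi_congr_right {α β β' : Type*} [Fintype α] [DecidableEq α]
    [Fintype β] [DecidableEq β] [Fintype β'] [DecidableEq β']
    (A : Ω → α) (Y : Ω → β) (Y' : Ω → β') (f : β → β') (g : β' → β)
    (hf : ∀ ω, Y' ω = f (Y ω)) (hg : ∀ ω, g (f (Y ω)) = Y ω) :
    mi μ A Y' = mi μ A Y := by
  unfold mi
  rw [ent_relabel Y Y' f g hf hg,
    ent_relabel (fun ω => (A ω, Y ω)) (fun ω => (A ω, Y' ω))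
      (fun p => (p.1, f p.2)) (fun p => (p.1, g p.2))
      (fun ω => by simp [hf ω]) (fun ω => by simp [hg ω])]

lemma cmi_congr_fst {α α' β γ : Type*} [Fintype α] [DecidableEq α]
    [Fintype α'] [DecidableEq α'] [Fintype β] [DecidableEq β] [Fintype γ] [DecidableEq γ]
    (U : Ω → α) (U' : Ω → α') (Y : Ω → β) (Z : Ω → γ) (f : α → α') (g : α' → α)
    (hf : ∀ ω, U' ω = f (U ω)) (hg : ∀ ω, g (f (U ω)) = U ω) :
    cmi μ U' Y Z = cmi μ U Y Z := by
  unfold cmi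
  rw [ent_relabel (fun ω => (U ω, Z ω)) (fun ω => (U' ω, Z ω))
      (fun p => (f p.1, p.2)) (fun p => (g p.1, p.2))
      (fun ω => by simp [hf ω]) (fun ω => by simp [hg ω]),
    ent_relabel (fun ω => (U ω, Y ω, Z ω)) (fun ω => (U' ω, Y ω, Z ω))
      (fun p => (f p.1, p.2)) (fun p => (g p.1, p.2))
      (fun ω => by simp [hf ω]) (fun ω => by simp [hg ω])]

lemma mi_chain {α β γ : Type*} [Fintype α] [DecidableEq α] [Fintype β] [DecidableEq β]
    [Fintype γ] [DecidableEq γ] (A : Ω → α) (B : Ω → β) (C : Ω → γ) :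
    mi μ A (fun ω => (B ω, C ω)) = mi μ A C + cmi μ A B C := by
  simp only [mi, cmi]
  ring

lemma cmi_chain {α α' β γ : Type*} [Fintype α] [DecidableEq α] [Fintype α'] [DecidableEq α']
    [Fintype β] [DecidableEq β] [Fintype γ] [DecidableEq γ]
    (U : Ω → α) (V : Ω → α') (N : Ω → β) (D : Ω → γ) :
    cmi μ (fun ω => (U ω, V ω)) N D = cmi μ U N D + cmi μ V N (fun ω => (U ω, D ω)) := by
  simp only [cmi]
  rw [ent_relabel (fun ω => ((U ω, V ω), D ω)) (fun ω => (V ω, U ω, D ω))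
      (fun p => (p.1.2, (p.1.1, p.2))) (fun q => ((q.2.1, q.1), q.2.2))
      (fun ω => rfl) (fun ω => rfl),
    ent_relabel (fun ω => ((U ω, V ω), N ω, D ω)) (fun ω => (V ω, N ω, U ω, D ω))
      (fun p => (p.1.2, (p.2.1, (p.1.1, p.2.2)))) (fun q => ((q.2.2.1, q.1), (q.2.1, q.2.2.2)))
      (fun ω => rfl) (fun ω => rfl),
    ent_relabel (fun ω => (U ω, N ω, D ω)) (fun ω => (N ω, U ω, D ω))
      (fun p => (p.2.1, (p.1, p.2.2))) (fun q => (q.2.1, (q.1, q.2.2)))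
      (fun ω => rfl) (fun ω => rfl)]
  ring

lemma cmi_eq {α β γ : Type*} [Fintype α] [DecidableEq α] [Fintype β] [DecidableEq β]
    [Fintype γ] [DecidableEq γ] (X : Ω → α) (Y : Ω → β) (Z : Ω → γ) :
    cmi μ X Y Z = ∑ v : α × β × γ, prob μ (fun ω => (X ω, Y ω, Z ω)) v *
      (Real.log (prob μ (fun ω => (X ω, Y ω, Z ω)) v)
        + Real.log (prob μ Z v.2.2)
        - Real.log (prob μ (fun ω => (X ω, Z ω)) (v.1, v.2.2))
        - Real.log (prob μ (fun ω => (Y ω, Z ω)) (v.2.1, v.2.2))) := by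
  rw [show cmi μ X Y Z = ent μ (fun ω => (X ω, Z ω)) + ent μ (fun ω => (Y ω, Z ω))
      - ent μ (fun ω => (X ω, Y ω, Z ω)) - ent μ Z from rfl]
  rw [ent_eq_sum (fun ω => (X ω, Y ω, Z ω)) (fun ω => (X ω, Z ω))
      (fun v => (v.1, v.2.2)) (fun ω => rfl),
    ent_eq_sum (fun ω => (X ω, Y ω, Z ω)) (fun ω => (Y ω, Z ω))
      (fun v => (v.2.1, v.2.2)) (fun ω => rfl),
    ent_eq_sum (fun ω => (X ω, Y ω, Z ω)) (fun ω => (X ω, Y ω, Z ω))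
      (fun v => v) (fun ω => rfl),
    ent_eq_sum (fun ω => (X ω, Y ω, Z ω)) Z (fun v => v.2.2) (fun ω => rfl)]
  simp only [mul_add, mul_sub, Finset.sum_add_distrib, Finset.sum_sub_distrib]
  ring

lemma cmi_nonneg {α β γ : Type*} [Fintype α] [DecidableEq α] [Fintype β] [DecidableEq β]
    [Fintype γ] [DecidableEq γ] (hμ0 : ∀ ω, 0 ≤ μ ω) (hμ1 : ∑ ω, μ ω = 1)
    (X : Ω → α) (Y : Ω → β) (Z : Ω → γ) : 0 ≤ cmi μ X Y Z := by
  classical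
  rw [cmi_eq X Y Z]
  set V : Ω → α × β × γ := fun ω => (X ω, Y ω, Z ω) with hV
  set p : α × β × γ → ℝ := prob μ V with hp
  set q : α × β × γ → ℝ := fun v =>
    prob μ (fun ω => (X ω, Z ω)) (v.1, v.2.2) * prob μ (fun ω => (Y ω, Z ω)) (v.2.1, v.2.2)
      / prob μ Z v.2.2 with hq
  set F : α × β × γ → ℝ := fun v => p v *
      (Real.log (p v) + Real.log (prob μ Z v.2.2)
        - Real.log (prob μ (fun ω => (X ω, Z ω)) (v.1, v.2.2))
        - Real.log (prob μ (fun ω => (Y ω, Z ω)) (v.2.1, v.2.2))) with hF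
  show 0 ≤ ∑ v, F v
  have hp0 : ∀ v, 0 ≤ p v := fun v => prob_nonneg hμ0 V v
  have hpXZ : ∀ v : α × β × γ, p v ≤ prob μ (fun ω => (X ω, Z ω)) (v.1, v.2.2) :=
    fun v => prob_le_comp hμ0 V (fun ω => (X ω, Z ω)) (fun v => (v.1, v.2.2)) (fun ω => rfl) v
  have hpYZ : ∀ v : α × β × γ, p v ≤ prob μ (fun ω => (Y ω, Z ω)) (v.2.1, v.2.2) :=
    fun v => prob_le_comp hμ0 V (fun ω => (Y ω, Z ω)) (fun v => (v.2.1, v.2.2)) (fun ω => rfl) v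
  have hpZ : ∀ v : α × β × γ, p v ≤ prob μ Z v.2.2 :=
    fun v => prob_le_comp hμ0 V Z (fun v => v.2.2) (fun ω => rfl) v
  set S : Finset (α × β × γ) := Finset.univ.filter (fun v => p v ≠ 0) with hS
  have hsum_restrict : ∑ v ∈ S, F v = ∑ v, F v := by
    refine Finset.sum_filter_of_ne fun v _ hv => ?_
    intro hc
    exact hv (by rw [hF]; simp only; rw [hc, zero_mul])
  have hterm : ∀ v ∈ S, p v - q v ≤ F v := by
    intro v hv
    rw [hS, Finset.mem_filter] at hv
    have hpv : 0 < p v := lt_of_le_of_ne (hp0 v) (Ne.symm hv.2)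
    have hXZ : 0 < prob μ (fun ω => (X ω, Z ω)) (v.1, v.2.2) := lt_of_lt_of_le hpv (hpXZ v)
    have hYZ : 0 < prob μ (fun ω => (Y ω, Z ω)) (v.2.1, v.2.2) := lt_of_lt_of_le hpv (hpYZ v)
    have hZ : 0 < prob μ Z v.2.2 := lt_of_lt_of_le hpv (hpZ v)
    have hqv : 0 < q v := div_pos (mul_pos hXZ hYZ) hZ
    have hlog : Real.log (q v / p v) ≤ q v / p v - 1 :=
      Real.log_le_sub_one_of_pos (div_pos hqv hpv)
    have hlogeq : Real.log (q v / p v)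
        = Real.log (prob μ (fun ω => (X ω, Z ω)) (v.1, v.2.2))
          + Real.log (prob μ (fun ω => (Y ω, Z ω)) (v.2.1, v.2.2))
          - Real.log (prob μ Z v.2.2) - Real.log (p v) := by
      rw [Real.log_div (ne_of_gt hqv) (ne_of_gt hpv), hq]
      simp only
      rw [Real.log_div (ne_of_gt (mul_pos hXZ hYZ)) (ne_of_gt hZ),
        Real.log_mul (ne_of_gt hXZ) (ne_of_gt hYZ)]
    have hmul : p v * Real.log (q v / p v) ≤ q v - p v := by
      have h1 := mul_le_mul_of_nonneg_left hlog hpv.le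
      have h2 : p v * (q v / p v) = q v := by field_simp
      nlinarith [h1, h2]
    have hFv : F v = -(p v * Real.log (q v / p v)) := by
      rw [hF]; simp only
      rw [hlogeq]; ring
    rw [hFv]
    linarith
  have hsumS_p : ∑ v ∈ S, p v = 1 := by
    rw [hS, Finset.sum_filter_of_ne fun v _ hv => hv, hp, sum_prob V, hμ1]
  have hsumS_q : ∑ v ∈ S, q v ≤ 1 := by
    set T : Finset (α × β × γ) := Finset.univ.filter (fun v => prob μ Z v.2.2 ≠ 0) with hT
    have hST : S ⊆ T := by
      intro v hv
      rw [hS, Finset.mem_filter] at hv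
      rw [hT, Finset.mem_filter]
      refine ⟨Finset.mem_univ _, fun h0 => hv.2 (le_antisymm (h0 ▸ hpZ v) (hp0 v))⟩
    have hq0 : ∀ v : α × β × γ, 0 ≤ q v := fun v =>
      div_nonneg (mul_nonneg (prob_nonneg hμ0 _ _) (prob_nonneg hμ0 _ _)) (prob_nonneg hμ0 _ _)
    have h1 : ∑ v ∈ S, q v ≤ ∑ v ∈ T, q v :=
      Finset.sum_le_sum_of_subset_of_nonneg hST (fun v _ _ => hq0 v)
    have h2 : ∑ v ∈ T, q v ≤ ∑ z, prob μ Z z := by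
      rw [hT, Finset.sum_filter]
      have hbij : Function.Bijective (fun v : α × β × γ => ((v.2.2, v.1, v.2.1) : γ × α × β)) :=
        Function.bijective_iff_has_inverse.mpr
          ⟨fun u => (u.2.1, u.2.2, u.1), fun v => rfl, fun u => rfl⟩
      rw [Fintype.sum_bijective _ hbij
        (fun v => if prob μ Z v.2.2 ≠ 0 then q v else 0)
        (fun u => if prob μ Z u.1 ≠ 0 then
          prob μ (fun ω => (X ω, Z ω)) (u.2.1, u.1) * prob μ (fun ω => (Y ω, Z ω)) (u.2.2, u.1)
            / prob μ Z u.1 else 0)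
        (fun v => by rw [hq])]
      rw [Fintype.sum_prod_type]
      refine Finset.sum_le_sum fun z _ => ?_
      by_cases hz : prob μ Z z = 0
      · simp [hz, prob_nonneg hμ0 Z z]
      · simp only [hz, ne_eq, not_false_eq_true, if_true]
        refine le_of_eq ?_
        have hy : ∀ x : α,
            (∑ y, prob μ (fun ω => (X ω, Z ω)) (x, z) * prob μ (fun ω => (Y ω, Z ω)) (y, z)
              / prob μ Z z) = prob μ (fun ω => (X ω, Z ω)) (x, z) := by
          intro x
          rw [← Finset.sum_div, ← Finset.mul_sum, sum_prob_fst Y Z z, mul_div_assoc,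
            div_self hz, mul_one]
        rw [Fintype.sum_prod_type]
        calc (∑ x, ∑ y, prob μ (fun ω => (X ω, Z ω)) (x, z)
                * prob μ (fun ω => (Y ω, Z ω)) (y, z) / prob μ Z z)
            = ∑ x, prob μ (fun ω => (X ω, Z ω)) (x, z) :=
              Finset.sum_congr rfl fun x _ => hy x
          _ = prob μ Z z := sum_prob_fst X Z z
    have h3 : ∑ z, prob μ Z z = 1 := by rw [sum_prob Z, hμ1]
    linarith
  have hmain : ∑ v ∈ S, (p v - q v) ≤ ∑ v ∈ S, F v := Finset.sum_le_sum hterm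
  rw [Finset.sum_sub_distrib] at hmain
  linarith [hsum_restrict, hmain, hsumS_p, hsumS_q]

lemma cmi_eq_zero_of_condIndep {α β γ : Type*} [Fintype α] [DecidableEq α]
    [Fintype β] [DecidableEq β] [Fintype γ] [DecidableEq γ] (hμ0 : ∀ ω, 0 ≤ μ ω)
    (X : Ω → α) (Y : Ω → β) (Z : Ω → γ) (h : CondIndep μ X Y Z) :
    cmi μ X Y Z = 0 := by
  rw [cmi_eq X Y Z]
  refine Finset.sum_eq_zero fun v _ => ?_
  by_cases hp : prob μ (fun ω => (X ω, Y ω, Z ω)) v = 0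
  · rw [hp, zero_mul]
  · have hpv : 0 < prob μ (fun ω => (X ω, Y ω, Z ω)) v :=
      lt_of_le_of_ne (prob_nonneg hμ0 _ _) (Ne.symm hp)
    have hXZ : 0 < prob μ (fun ω => (X ω, Z ω)) (v.1, v.2.2) :=
      lt_of_lt_of_le hpv (prob_le_comp hμ0 (fun ω => (X ω, Y ω, Z ω)) (fun ω => (X ω, Z ω))
        (fun v => (v.1, v.2.2)) (fun ω => rfl) v)
    have hYZ : 0 < prob μ (fun ω => (Y ω, Z ω)) (v.2.1, v.2.2) :=
      lt_of_lt_of_le hpv (prob_le_comp hμ0 (fun ω => (X ω, Y ω, Z ω)) (fun ω => (Y ω, Z ω))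
        (fun v => (v.2.1, v.2.2)) (fun ω => rfl) v)
    have hZ : 0 < prob μ Z v.2.2 :=
      lt_of_lt_of_le hpv (prob_le_comp hμ0 (fun ω => (X ω, Y ω, Z ω)) Z
        (fun v => v.2.2) (fun ω => rfl) v)
    have key := h v.1 v.2.1 v.2.2
    simp only [Prod.mk.eta] at key
    have hlogs : Real.log (prob μ (fun ω => (X ω, Y ω, Z ω)) v) + Real.log (prob μ Z v.2.2)
        = Real.log (prob μ (fun ω => (X ω, Z ω)) (v.1, v.2.2))
          + Real.log (prob μ (fun ω => (Y ω, Z ω)) (v.2.1, v.2.2)) := by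
      rw [← Real.log_mul hp (ne_of_gt hZ), key,
        Real.log_mul (ne_of_gt hXZ) (ne_of_gt hYZ)]
    have hbig : Real.log (prob μ (fun ω => (X ω, Y ω, Z ω)) v) + Real.log (prob μ Z v.2.2)
        - Real.log (prob μ (fun ω => (X ω, Z ω)) (v.1, v.2.2))
        - Real.log (prob μ (fun ω => (Y ω, Z ω)) (v.2.1, v.2.2)) = 0 := by linarith
    rw [hbig, mul_zero]

end Aux

section SplitJoin

/-- Split a `Fin j`-tuple into the parts outside and inside a subset `s ⊆ range j`. -/
def splitFun {α : ℕ → Type*} (j : ℕ) (s : Finset ℕ) (hs : s ⊆ Finset.range j)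
    (t : (i : Fin j) → α i.1) :
    ((i : (Finset.range j \ s : Finset ℕ)) → α i.1) × ((i : s) → α i.1) :=
  (fun i => t ⟨i.1, Finset.mem_range.mp (Finset.mem_sdiff.mp i.2).1⟩,
   fun i => t ⟨i.1, Finset.mem_range.mp (hs i.2)⟩)

/-- Reassemble a `Fin j`-tuple from its two parts. -/
def joinFun {α : ℕ → Type*} (j : ℕ) (s : Finset ℕ)
    (p : ((i : (Finset.range j \ s : Finset ℕ)) → α i.1) × ((i : s) → α i.1)) :
    (i : Fin j) → α i.1 :=
  fun i => if h : i.1 ∈ s then p.2 ⟨i.1, h⟩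
    else p.1 ⟨i.1, Finset.mem_sdiff.mpr ⟨Finset.mem_range.mpr i.isLt, h⟩⟩

lemma join_split {α : ℕ → Type*} (j : ℕ) (s : Finset ℕ) (hs : s ⊆ Finset.range j)
    (t : (i : Fin j) → α i.1) : joinFun j s (splitFun j s hs t) = t := by
  funext i
  unfold joinFun splitFun
  dsimp only
  split <;> rfl

end SplitJoin

/-- Positivity of the entropy lower bound `Δ_I = η − δi` for the whole
system: with `D_j` the restriction of the initial states to the dependency set `dep(j)`
and `N_j` the restriction to the complementary part of `{0,…,j−1}`, if for all `j ≥ 2`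
(here zero-based `j ≥ 1`) the final state `X'_j` is conditionally independent of `N_j`
given `(X_j, D_j)` and of the previous final states given the previous initial states,
then `Σ_j [I(X'_j;D_j) − I(X_j;D_j)] − Σ_j [I(X'_j;X'_{1:j-1}) − I(X_j;X_{1:j-1})] ≥ 0`. -/
theorem statement6 {Ω : Type*} [Fintype Ω] (μ : Ω → ℝ)
    (hμ0 : ∀ ω, 0 ≤ μ ω) (hμ1 : ∑ ω, μ ω = 1)
    {α β : ℕ → Type*} [∀ i, Fintype (α i)] [∀ i, DecidableEq (α i)]
    [∀ i, Fintype (β i)] [∀ i, DecidableEq (β i)]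
    (n : ℕ) (hn : 1 ≤ n) (X : (i : ℕ) → Ω → α i) (X' : (i : ℕ) → Ω → β i)
    (dep : ℕ → Finset ℕ) (hdep : ∀ j, dep j ⊆ Finset.range j)
    (ha : ∀ j ∈ Finset.Ico 1 n,
      CondIndep μ (X' j) (restrict X (Finset.range j \ dep j))
        (fun ω => (X j ω, restrict X (dep j) ω)))
    (hb : ∀ j ∈ Finset.Ico 1 n, CondIndep μ (X' j) (tup X' j) (tup X j)) :
    (∑ j ∈ Finset.Ico 1 n,
        (mi μ (X' j) (restrict X (dep j)) - mi μ (X j) (restrict X (dep j))))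
      - (∑ j ∈ Finset.Ico 1 n,
          (mi μ (X' j) (tup X' j) - mi μ (X j) (tup X j))) ≥ 0 := by
  rw [ge_iff_le, ← Finset.sum_sub_distrib]
  refine Finset.sum_nonneg fun j hj => ?_
  have haj := ha j hj
  have hbj := hb j hj
  -- Step 1 : I(X'_j ; X'_{<j}) ≤ I(X'_j ; X_{<j})
  have h1 : mi μ (X' j) (fun ω => (tup X' j ω, tup X j ω))
      = mi μ (X' j) (tup X j) + cmi μ (X' j) (tup X' j) (tup X j) := mi_chain _ _ _
  have h1' : mi μ (X' j) (fun ω => (tup X j ω, tup X' j ω))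
      = mi μ (X' j) (tup X' j) + cmi μ (X' j) (tup X j) (tup X' j) := mi_chain _ _ _
  have h1z : cmi μ (X' j) (tup X' j) (tup X j) = 0 :=
    cmi_eq_zero_of_condIndep hμ0 _ _ _ hbj
  have h1n : 0 ≤ cmi μ (X' j) (tup X j) (tup X' j) := cmi_nonneg hμ0 hμ1 _ _ _
  have h1s : mi μ (X' j) (fun ω => (tup X' j ω, tup X j ω))
      = mi μ (X' j) (fun ω => (tup X j ω, tup X' j ω)) :=
    mi_congr_right (X' j) (fun ω => (tup X j ω, tup X' j ω))
      (fun ω => (tup X' j ω, tup X j ω)) Prod.swap Prod.swap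
      (fun ω => rfl) (fun ω => rfl)
  have step1 : mi μ (X' j) (tup X' j) ≤ mi μ (X' j) (tup X j) := by linarith
  -- Step 2 : chain rule decompositions of I(· ; X_{<j})
  have h2 : mi μ (X j) (tup X j) = mi μ (X j) (restrict X (dep j))
      + cmi μ (X j) (restrict X (Finset.range j \ dep j)) (restrict X (dep j)) := by
    have hc := mi_congr_right (μ := μ) (X j) (tup X j)
      (fun ω => (restrict X (Finset.range j \ dep j) ω, restrict X (dep j) ω))
      (splitFun j (dep j) (hdep j)) (joinFun j (dep j))
      (fun ω => rfl) (fun ω => join_split j (dep j) (hdep j) (tup X j ω))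
    rw [← hc]
    exact mi_chain _ _ _
  have h2' : mi μ (X' j) (tup X j) = mi μ (X' j) (restrict X (dep j))
      + cmi μ (X' j) (restrict X (Finset.range j \ dep j)) (restrict X (dep j)) := by
    have hc := mi_congr_right (μ := μ) (X' j) (tup X j)
      (fun ω => (restrict X (Finset.range j \ dep j) ω, restrict X (dep j) ω))
      (splitFun j (dep j) (hdep j)) (joinFun j (dep j))
      (fun ω => rfl) (fun ω => join_split j (dep j) (hdep j) (tup X j ω))
    rw [← hc]
    exact mi_chain _ _ _
  -- Step 3 : I(X'_j ; N_j | D_j) ≤ I(X_j ; N_j | D_j)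
  have h3 : cmi μ (fun ω => (X j ω, X' j ω)) (restrict X (Finset.range j \ dep j))
        (restrict X (dep j))
      = cmi μ (X j) (restrict X (Finset.range j \ dep j)) (restrict X (dep j))
        + cmi μ (X' j) (restrict X (Finset.range j \ dep j))
          (fun ω => (X j ω, restrict X (dep j) ω)) := cmi_chain _ _ _ _
  have h3' : cmi μ (fun ω => (X' j ω, X j ω)) (restrict X (Finset.range j \ dep j))
        (restrict X (dep j))
      = cmi μ (X' j) (restrict X (Finset.range j \ dep j)) (restrict X (dep j))
        + cmi μ (X j) (restrict X (Finset.range j \ dep j))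
          (fun ω => (X' j ω, restrict X (dep j) ω)) := cmi_chain _ _ _ _
  have h3z : cmi μ (X' j) (restrict X (Finset.range j \ dep j))
      (fun ω => (X j ω, restrict X (dep j) ω)) = 0 :=
    cmi_eq_zero_of_condIndep hμ0 _ _ _ haj
  have h3n : 0 ≤ cmi μ (X j) (restrict X (Finset.range j \ dep j))
      (fun ω => (X' j ω, restrict X (dep j) ω)) := cmi_nonneg hμ0 hμ1 _ _ _
  have h3s : cmi μ (fun ω => (X j ω, X' j ω)) (restrict X (Finset.range j \ dep j))
        (restrict X (dep j))
      = cmi μ (fun ω => (X' j ω, X j ω)) (restrict X (Finset.range j \ dep j))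
        (restrict X (dep j)) :=
    cmi_congr_fst (fun ω => (X' j ω, X j ω)) (fun ω => (X j ω, X' j ω))
      (restrict X (Finset.range j \ dep j)) (restrict X (dep j))
      Prod.swap Prod.swap (fun ω => rfl) (fun ω => rfl)
  have step3 : cmi μ (X' j) (restrict X (Finset.range j \ dep j)) (restrict X (dep j))
      ≤ cmi μ (X j) (restrict X (Finset.range j \ dep j)) (restrict X (dep j)) := by
    linarith
  linarith
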